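/- arXiv:1503.08401 — 2 statements merged into one kernel-verified Lean document; each statement's English description precedes it below -/
import Mathlib

section
/- Let Θ : m × m → m on m = ℂ³ ⊕ iℝ be defined by Θ = −ε₁, where ε₁((z,a),(w,b)) = (conj(z)×conj(w),0), so that Θ((z,a),(w,b)) = −(conj(z)×conj(w), 0). Then Θ is skew-symmetric, satisfies g(Θ(x,y),x) = 0 for all x,y, but Θ is not a 2-fold vector cross product: there exist x, y ∈ m with g(Θ(x,y),Θ(x,y)) ≠ g(x,x)g(y,y) − g(x,y)². -/
abbrev mSpace (n : ℕ) := (Fin n → ℂ) × ℂ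

/-- The complex cross product on `ℂ³`. -/
def cross3 (u v : Fin 3 → ℂ) : Fin 3 → ℂ :=
  fun k => u (k + 1) * v (k + 2) - u (k + 2) * v (k + 1)

/-- The inner product `g((z,a),(w,b)) = Re(zᵗ conj(w)) − ab` on `m = ℂ³ ⊕ iℝ`. -/
noncomputable def gm (x y : mSpace 3) : ℝ :=
  (∑ l, x.1 l * (starRingEnd ℂ) (y.1 l)).re - (x.2 * y.2).re

/-- `Θ = −ε₁ : Θ((z,a),(w,b)) = −(conj(z) × conj(w), 0)`. -/
noncomputable def Theta (x y : mSpace 3) : mSpace 3 :=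
  (-(cross3 (fun l => (starRingEnd ℂ) (x.1 l)) (fun l => (starRingEnd ℂ) (y.1 l))), 0)

lemma cross3_apply (u v : Fin 3 → ℂ) (k : Fin 3) :
    cross3 u v k = u (k + 1) * v (k + 2) - u (k + 2) * v (k + 1) := rfl

/-- `Θ` is skew-symmetric and satisfies `g(Θ(x,y), x) = 0` for all `x, y`, but `Θ` is
not a 2-fold vector cross product: there are `x, y ∈ m` with
`g(Θ(x,y),Θ(x,y)) ≠ g(x,x)g(y,y) − g(x,y)²`. -/
theorem Theta_properties :
    (∀ x y : mSpace 3, Theta x y = -Theta y x) ∧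
    (∀ x y : mSpace 3, gm (Theta x y) x = 0) ∧
    (∃ x y : mSpace 3, x.2.re = 0 ∧ y.2.re = 0 ∧
      gm (Theta x y) (Theta x y) ≠ gm x x * gm y y - (gm x y) ^ 2) := by
  refine ⟨?_, ?_, ?_⟩
  · intro x y
    simp only [Theta, Prod.neg_mk, neg_neg, neg_zero, Prod.mk.injEq, and_true]
    funext k
    simp only [Pi.neg_apply, cross3_apply]
    ring
  · intro x y
    have h1 : ((0:Fin 3)+1) = 1 := rfl
    have h2 : ((0:Fin 3)+2) = 2 := rfl
    have h3 : ((1:Fin 3)+1) = 2 := rfl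
    have h4 : ((1:Fin 3)+2) = 0 := rfl
    have h5 : ((2:Fin 3)+1) = 0 := rfl
    have h6 : ((2:Fin 3)+2) = 1 := rfl
    simp only [gm, Theta, Fin.sum_univ_three, Pi.neg_apply, cross3_apply, h1, h2, h3, h4, h5, h6,
      Complex.add_re, Complex.sub_re, Complex.mul_re, Complex.mul_im,
      Complex.neg_re, Complex.neg_im, Complex.sub_im, Complex.add_im, Complex.conj_re,
      Complex.conj_im, Complex.zero_re, Complex.zero_im, mul_zero, zero_mul]
    ring
  · refine ⟨(![1,0,0], Complex.I), (![0,1,0], 0), by simp, by simp, ?_⟩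
    have h1 : ((0:Fin 3)+1) = 1 := rfl
    have h2 : ((0:Fin 3)+2) = 2 := rfl
    have h3 : ((1:Fin 3)+1) = 2 := rfl
    have h4 : ((1:Fin 3)+2) = 0 := rfl
    have h5 : ((2:Fin 3)+1) = 0 := rfl
    have h6 : ((2:Fin 3)+2) = 1 := rfl
    simp only [gm, Theta, Fin.sum_univ_three, Pi.neg_apply, cross3_apply, h1, h2, h3, h4, h5, h6]
    norm_num [Complex.ext_iff, Matrix.cons_val_two, Matrix.tail_cons, Matrix.head_cons]
end

section
/- Let α : m × m → m on m = ℂ³ ⊕ iℝ be the bilinear map corresponding to parameters r = 1, q ∈ ℂ with |q| = 1 in the skew-torsion family, i.e. (using the invariant curvature formula) the curvature R(x,y)z := α(x,α(y,z)) − α(y,α(x,z)) − α([x,y]_m, z) − [[x,y]_h, z] vanishes identically, where the resulting identity reduces (for z,w,u ∈ ℂ³) to: conj(z) × (w × u) − conj(w) × (z × u) + z(conj(w)ᵗu) − w(conj(z)ᵗu) − u(conj(w)ᵗz − conj(z)ᵗw) = 0 for all z, w, u ∈ ℂ³. -/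
/-- The Hermitian pairing `conj(w)ᵗ u = Σ conj(wₗ) uₗ`. -/
noncomputable def hermC (w u : Fin 3 → ℂ) : ℂ := ∑ l, (starRingEnd ℂ) (w l) * u l

/-- The flatness identity on `ℂ³` (curvature vanishing for the invariant connections with
`r = 1`, `|q| = 1` on `S⁷`):
`conj(z) × (w × u) − conj(w) × (z × u) + z(conj(w)ᵗu) − w(conj(z)ᵗu) − u(conj(w)ᵗz − conj(z)ᵗw) = 0`. -/
theorem flatness_identity (z w u : Fin 3 → ℂ) :
    cross3 (fun l => (starRingEnd ℂ) (z l)) (cross3 w u)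
      - cross3 (fun l => (starRingEnd ℂ) (w l)) (cross3 z u)
      + hermC w u • z - hermC z u • w - (hermC w z - hermC z w) • u = 0 := by
  funext k
  simp only [cross3, hermC, Fin.sum_univ_three, Pi.sub_apply, Pi.add_apply, Pi.smul_apply,
    Pi.zero_apply, smul_eq_mul]
  fin_cases k <;> simp <;> ring
end
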